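/- Fix integers c ≥ 2 and ℓ ≥ 1, d_0 = 5c·3^{2ℓ(ℓ+1)}, and a space requirement δ and budget (α,β) for century 0. In every connected graph G with a tie-breaker Λ, there is a 0th-century society in G. -/

import Mathlib

open SimpleGraph

/-- The distance in `G` between two sets of vertices, as an extended natural
(`⊤` if no path exists). -/
noncomputable def setDist {V : Type} (G : SimpleGraph V) (X Y : Set V) : ℕ∞ :=
  ⨅ (x : X) (y : Y), G.edist x.1 y.1

/-- Incidence on `U(H) = V(H) ⊕ E(H)`. -/
def UIncident {W : Type} (H : SimpleGraph W) : (W ⊕ H.edgeSet) → (W ⊕ H.edgeSet) → Prop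
  | Sum.inl v, Sum.inr e => v ∈ (e : Sym2 W)
  | Sum.inr e, Sum.inl v => v ∈ (e : Sym2 W)
  | _, _ => False

/-- `η` exhibits `H` as a `c`-fat minor of `G`. -/
def IsFatMinorVia {V W : Type} (G : SimpleGraph V) (H : SimpleGraph W) (c : ℕ)
    (η : (W ⊕ H.edgeSet) → Set V) : Prop :=
  (∀ x, (η x).Nonempty) ∧
  (∀ x, (G.induce (η x)).Connected) ∧
  (Pairwise fun x y => Disjoint (η x) (η y)) ∧
  (∀ e : H.edgeSet, ∀ v : W, v ∈ (e : Sym2 W) →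
    ∃ a ∈ η (Sum.inl v), ∃ b ∈ η (Sum.inr e), G.Adj a b) ∧
  (∀ x y, x ≠ y → ¬ UIncident H x y → (c : ℕ∞) < setDist G (η x) (η y))

/-- `G` contains `H` as a `c`-fat minor. -/
def HasFatMinor {V W : Type} (G : SimpleGraph V) (H : SimpleGraph W) (c : ℕ) : Prop :=
  ∃ η, IsFatMinorVia G H c η

/-- Vertices of the tree `H ℓ`: the root `none`, and for each of three branches `i : Fin 3`
a vertex `some (i, l)` for each binary sequence `l` of length `< ℓ`.  For `ℓ = 0` only the
root exists. -/
def HVert (ℓ : ℕ) : Type := Option (Fin 3 × {l : List (Fin 2) // l.length < ℓ})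

/-- The tree `H ℓ`: every vertex has degree one or three, and every path from the root to a
leaf has length exactly `ℓ`.  (`HTree 0` is the one-vertex tree.) -/
def HTree (ℓ : ℕ) : SimpleGraph (HVert ℓ) :=
  SimpleGraph.fromRel (fun x y =>
    (∃ (i : Fin 3) (h : ([] : List (Fin 2)).length < ℓ), x = none ∧ y = some (i, ⟨[], h⟩)) ∨
    (∃ (i : Fin 3) (l : List (Fin 2)) (b : Fin 2) (h : l.length < ℓ)
        (h' : (l ++ [b]).length < ℓ),
      x = some (i, ⟨l, h⟩) ∧ y = some (i, ⟨l ++ [b], h'⟩)))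

/-- Whether an element of `U(H ℓ)` belongs to branch `i` (the component `B_i` of
`H_ℓ ∖ root`, or an edge with an endpoint there: an edge of `B_i`, or `e_i`). -/
def inBranch (ℓ : ℕ) (i : Fin 3) : (HVert ℓ ⊕ (HTree ℓ).edgeSet) → Prop
  | Sum.inl v => ∃ p, v = some (i, p)
  | Sum.inr e => ∃ v, v ∈ (e : Sym2 (HVert ℓ)) ∧ ∃ p, v = some (i, p)

/-- `V(η(B_i)) ∪ V(η(e_i))`: the union of the branch sets of branch `i`. -/
def branchSide {V : Type} (ℓ : ℕ) (i : Fin 3)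
    (η : (HVert ℓ ⊕ (HTree ℓ).edgeSet) → Set V) : Set V :=
  ⋃ x ∈ {x | inBranch ℓ i x}, η x

/-- `η` exhibits `H_ℓ` as a `c`-superfat minor of `G`. -/
def IsSuperfatMinorVia {V : Type} (G : SimpleGraph V) (ℓ c : ℕ)
    (η : (HVert ℓ ⊕ (HTree ℓ).edgeSet) → Set V) : Prop :=
  IsFatMinorVia G (HTree ℓ) c η ∧
  ∀ i j : Fin 3, i ≠ j → ∀ x ∈ branchSide ℓ i η, ∀ y ∈ branchSide ℓ j η,
    ((3 * c : ℕ) : ℕ∞) < G.edist x y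

/-- `G` contains `H_ℓ` as a `c`-superfat minor. -/
def HasSuperfatMinor {V : Type} (G : SimpleGraph V) (ℓ c : ℕ) : Prop :=
  ∃ η, IsSuperfatMinorVia G ℓ c η

/-- `X ⊆ V(G)` contains a `c`-superfat `H_ℓ`-minor of `G` (distances in `G`). -/
def SuperfatIn {V : Type} (G : SimpleGraph V) (ℓ c : ℕ) (X : Set V) : Prop :=
  ∃ η, IsSuperfatMinorVia G ℓ c η ∧ ∀ z, η z ⊆ X

/-- `X ⊆ V(G)` has quasi-size at most `(k,r)`. -/
def QuasiSize {V : Type} (G : SimpleGraph V) (X : Set V) (k r : ℕ) : Prop :=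
  ∃ Y : Set V, Y.encard ≤ k ∧ ∀ x ∈ X, ∃ y ∈ Y, G.edist x y ≤ r

/-- `X ⊆ V(G)` has quasi-line-width at most `(k,r)`: `G[X]` has a line-decomposition
each of whose bags has quasi-size at most `(k,r)` in `G`. -/
def QuasiLineWidth {V : Type} (G : SimpleGraph V) (X : Set V) (k r : ℕ) : Prop :=
  ∃ (T : Type) (_ : LinearOrder T) (B : T → Set V),
    (∀ t, B t ⊆ X) ∧
    (∀ v ∈ X, ∃ t, v ∈ B t) ∧
    (∀ u v, u ∈ X → v ∈ X → G.Adj u v → ∃ t, u ∈ B t ∧ v ∈ B t) ∧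
    (∀ t₁ t₂ t₃ : T, t₁ < t₂ → t₂ < t₃ → B t₁ ∩ B t₃ ⊆ B t₂) ∧
    (∀ t, QuasiSize G (B t) k r)

/-- The boundary of `X`: the vertices of `X` with a neighbour outside `X`. -/
def bd {V : Type} (G : SimpleGraph V) (X : Set V) : Set V :=
  {v | v ∈ X ∧ ∃ u, u ∉ X ∧ G.Adj v u}

/-- `X` has quasi-bound at most `(a,b)`. -/
def QuasiBound {V : Type} (G : SimpleGraph V) (X : Set V) (a b : ℕ) : Prop :=
  QuasiLineWidth G X a b ∧ QuasiSize G (bd G X) a b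

/-- A building: a set of vertices inducing a connected subgraph. -/
def IsBuilding {V : Type} (G : SimpleGraph V) (X : Set V) : Prop := (G.induce X).Connected

/-- A (finite) path of `G`, bundled with its two ends. -/
structure PathIn {V : Type} (G : SimpleGraph V) where
  a : V
  b : V
  walk : G.Walk a b
  isPath : walk.IsPath

/-- The edges of a bundled path, as a set of edges of `G`. -/
def PathIn.edgeSet {V : Type} {G : SimpleGraph V} (P : PathIn G) : Set G.edgeSet :=
  {e | (e : Sym2 V) ∈ P.walk.edges}

/-- The reverse of a bundled path. -/
def PathIn.rev {V : Type} {G : SimpleGraph V} (P : PathIn G) : PathIn G :=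
  ⟨P.b, P.a, P.walk.reverse, P.isPath.reverse⟩

/-- `P` is `Λ`-shorter than `Q`: `P` has fewer edges, or they have equally many edges and
the `Λ`-first edge of the symmetric difference of their edge sets belongs to `P`. -/
def LShorter {V : Type} {G : SimpleGraph V} (Λ : G.edgeSet → G.edgeSet → Prop)
    (P Q : PathIn G) : Prop :=
  P.walk.length < Q.walk.length ∨
  (P.walk.length = Q.walk.length ∧
    ∃ e ∈ P.edgeSet \ Q.edgeSet,
      ∀ f ∈ (P.edgeSet \ Q.edgeSet) ∪ (Q.edgeSet \ P.edgeSet), f ≠ e → Λ e f)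

/-- The Voronoi cell of `X` with respect to the family `S` (under the tie-breaker `Λ`):
all vertices `v` such that some path between `v` and `X` is `Λ`-shorter than every other
path between `v` and any member of `S`. -/
def VCell {V : Type} (G : SimpleGraph V) (Λ : G.edgeSet → G.edgeSet → Prop)
    (S : Set (Set V)) (X : Set V) : Set V :=
  {v | ∃ P : PathIn G, P.a = v ∧ P.b ∈ X ∧
    ∀ Y ∈ S, ∀ Q : PathIn G, Q.a = v → Q.b ∈ Y → Q ≠ P → LShorter Λ P Q}

/-- Two sets of vertices touch: they intersect or are joined by an edge. -/
def Touch {V : Type} (G : SimpleGraph V) (X Y : Set V) : Prop :=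
  (X ∩ Y).Nonempty ∨ ∃ x ∈ X, ∃ y ∈ Y, G.Adj x y

/-- `X` adjoins `Y` (both in `𝒯`): their Voronoi cells touch. -/
def Adjoins {V : Type} (G : SimpleGraph V) (Λ : G.edgeSet → G.edgeSet → Prop)
    (𝒯 : Set (Set V)) (X Y : Set V) : Prop :=
  X ≠ Y ∧ Touch G (VCell G Λ 𝒯 X) (VCell G Λ 𝒯 Y)

/-- `C ⊆ 𝒯` is adjoin-connected. -/
def AdjoinConnected {V : Type} (G : SimpleGraph V) (Λ : G.edgeSet → G.edgeSet → Prop)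
    (𝒯 : Set (Set V)) (C : Set (Set V)) : Prop :=
  ∀ A B : Set (Set V), A ∪ B = C → Disjoint A B → A.Nonempty → B.Nonempty →
    ∃ X ∈ A, ∃ Y ∈ B, Adjoins G Λ 𝒯 X Y

/-- A space requirement for century `k`. -/
def IsSpaceReq (c ℓ d₀ k : ℕ) (δ : ℤ → ℕ) : Prop :=
  (∀ i : ℤ, 2 * (k : ℤ) - 2 ≤ i → i < 2 * (ℓ : ℤ) → 2 * δ (i + 1) + 2 ≤ δ i) ∧
  (∀ i : ℤ, 0 ≤ i → i ≤ 2 * (ℓ : ℤ) → δ i ≤ d₀) ∧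
  5 * c ≤ δ (2 * (ℓ : ℤ))

-- The rank of a member of a society: `k` for forts, `k - 1` for houses.
open Classical in
noncomputable def rkSoc {V : Type} (k : ℕ) (forts : Set (Set V)) (X : Set V) : ℤ :=
  if X ∈ forts then (k : ℤ) else (k : ℤ) - 1

/-- A `k`th-century society in `G` (with tie-breaker `Λ`, space requirement `δ` and
budget `(α, β)`): the members of `𝒯` are pairwise disjoint buildings, `forts ⊆ 𝒯` are
its forts and `𝒯 \ forts` its houses. -/
def IsSociety {V : Type} (G : SimpleGraph V) (Λ : G.edgeSet → G.edgeSet → Prop)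
    (c d₀ k : ℕ) (δ : ℤ → ℕ) (α β : ℕ) (𝒯 forts : Set (Set V)) : Prop :=
  forts ⊆ 𝒯 ∧
  (∀ X ∈ 𝒯, IsBuilding G X) ∧
  (𝒯.Pairwise fun X Y => Disjoint X Y) ∧
  (∀ v : V, ∃ X ∈ 𝒯, setDist G {v} X ≤ (d₀ : ℕ∞)) ∧
  (∀ X ∈ 𝒯, ∀ Y ∈ 𝒯, X ≠ Y →
    ((δ (rkSoc k forts X + rkSoc k forts Y) : ℕ) : ℕ∞) < setDist G X Y) ∧
  (∀ X ∈ forts, SuperfatIn G k c X) ∧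
  (∀ X ∈ forts, QuasiBound G X α β) ∧
  (∀ C : Set (Set V), C ⊆ 𝒯 \ forts → AdjoinConnected G Λ 𝒯 C →
    (∀ C', C ⊆ C' → C' ⊆ 𝒯 \ forts → AdjoinConnected G Λ 𝒯 C' → C' = C) →
    QuasiBound G (⋃ X ∈ C, VCell G Λ 𝒯 X) α (β - d₀))

-- The rank of a member of a realm: `k+1` for castles, `k` for forts, `k-1` for houses.
open Classical in
noncomputable def rkRealm {V : Type} (k : ℕ) (forts castles : Set (Set V)) (X : Set V) : ℤ :=
  if X ∈ castles then (k : ℤ) + 1 else if X ∈ forts then (k : ℤ) else (k : ℤ) - 1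

-- The class of a member of a realm: `2` for castles, `1` for forts, `0` for houses.
open Classical in
noncomputable def classRealm {V : Type} (forts castles : Set (Set V)) (X : Set V) : ℕ :=
  if X ∈ castles then 2 else if X ∈ forts then 1 else 0

/-- A community of a realm: an adjoin-connected set of houses (not necessarily maximal). -/
def IsCommunity {V : Type} (G : SimpleGraph V) (Λ : G.edgeSet → G.edgeSet → Prop)
    (𝒯 forts castles C : Set (Set V)) : Prop :=
  C ⊆ 𝒯 ∧ (∀ X ∈ C, X ∉ forts ∧ X ∉ castles) ∧ AdjoinConnected G Λ 𝒯 C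

/-- A `k`th-century realm in `G`: buildings partitioned into houses, forts (`forts`)
and castles (`castles`), satisfying the axioms of a realm. -/
def IsRealm {V : Type} (G : SimpleGraph V) (Λ : G.edgeSet → G.edgeSet → Prop)
    (c ℓ d₀ k : ℕ) (δ : ℤ → ℕ) (α β : ℕ) (𝒯 forts castles : Set (Set V)) : Prop :=
  forts ⊆ 𝒯 ∧ castles ⊆ 𝒯 ∧ Disjoint forts castles ∧
  (∀ X ∈ 𝒯, IsBuilding G X) ∧
  (𝒯.Pairwise fun X Y => Disjoint X Y) ∧
  (∀ v : V, ∃ X ∈ 𝒯, setDist G {v} X ≤ (d₀ : ℕ∞)) ∧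
  (∀ X ∈ 𝒯, ∀ Y ∈ 𝒯, X ≠ Y →
    ((δ (rkRealm k forts castles X + rkRealm k forts castles Y) : ℕ) : ℕ∞) < setDist G X Y) ∧
  (∀ X ∈ forts, SuperfatIn G k c X) ∧
  (∀ X ∈ castles, SuperfatIn G (k + 1) c X) ∧
  (∀ X ∈ forts, QuasiBound G X α β) ∧
  (∀ X ∈ castles, QuasiBound G X (8 * α) (β + (ℓ - k) * d₀)) ∧
  (∀ C, IsCommunity G Λ 𝒯 forts castles C → QuasiBound G (⋃₀ C) α β)

/-- The realm `(𝒯₂, forts₂, castles₂)` is an extension of `(𝒯₁, forts₁, castles₁)`. -/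
def RealmExtends {V : Type} (𝒯₁ forts₁ castles₁ 𝒯₂ forts₂ castles₂ : Set (Set V)) : Prop :=
  ∀ X₁ ∈ 𝒯₁, ∃ X₂ ∈ 𝒯₂, X₁ ⊆ X₂ ∧
    (classRealm forts₁ castles₁ X₁ < classRealm forts₂ castles₂ X₂ ∨
      (X₁ = X₂ ∧ classRealm forts₁ castles₁ X₁ = classRealm forts₂ castles₂ X₂))

/-- An optimal `k`th-century realm: no other realm is an extension of it. -/
def IsOptimalRealm {V : Type} (G : SimpleGraph V) (Λ : G.edgeSet → G.edgeSet → Prop)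
    (c ℓ d₀ k : ℕ) (δ : ℤ → ℕ) (α β : ℕ) (𝒯 forts castles : Set (Set V)) : Prop :=
  IsRealm G Λ c ℓ d₀ k δ α β 𝒯 forts castles ∧
  ∀ 𝒯' forts' castles', IsRealm G Λ c ℓ d₀ k δ α β 𝒯' forts' castles' →
    RealmExtends 𝒯 forts castles 𝒯' forts' castles' →
    𝒯' = 𝒯 ∧ forts' = forts ∧ castles' = castles

/-- A `c`-leg on `X` in `W`: a geodesic `P` of length exactly `c` with one end in `X`,
all other vertices in `W`, such that every vertex of `W` not on `P` has distance more
than `c` from `X`. -/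
def IsCLeg {V : Type} (G : SimpleGraph V) (c : ℕ) (X W : Set V) (P : PathIn G) : Prop :=
  P.a ∈ X ∧
  (∀ v ∈ P.walk.support, v = P.a ∨ v ∈ W) ∧
  P.walk.length = c ∧
  G.edist P.a P.b = (c : ℕ∞) ∧
  (∀ v ∈ W, v ∉ P.walk.support → (c : ℕ∞) < setDist G {v} X)

/-- `P` is an induced path of `G`. -/
def IsInducedPath {V : Type} (G : SimpleGraph V) (P : PathIn G) : Prop :=
  ∀ u ∈ P.walk.support, ∀ v ∈ P.walk.support, G.Adj u v → s(u, v) ∈ P.walk.edges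

/-- The subpath of `P` of length `c` starting at its end `P.a` is a geodesic, and the
vertices of `P` at distance at most `c` from `X` are exactly those of this subpath. -/
def GeoPrefix {V : Type} (G : SimpleGraph V) (c : ℕ) (X : Set V) (P : PathIn G) : Prop :=
  (∀ w, P.walk.support[c]? = some w → G.edist P.a w = (c : ℕ∞)) ∧
  (∀ v ∈ P.walk.support, (setDist G {v} X ≤ (c : ℕ∞) ↔ v ∈ P.walk.support.take (c + 1)))

/-- `P` is a passage of the realm `(𝒯, forts, castles)` joining `X₁` and `X₂`. -/
def IsPassage {V : Type} (G : SimpleGraph V) (Λ : G.edgeSet → G.edgeSet → Prop)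
    (c ℓ d₀ k : ℕ) (δ : ℤ → ℕ) (𝒯 forts castles : Set (Set V))
    (X₁ X₂ : Set V) (P : PathIn G) : Prop :=
  X₁ ∈ 𝒯 ∧ X₂ ∈ 𝒯 ∧ X₁ ∉ castles ∧ X₂ ∉ castles ∧ X₁ ≠ X₂ ∧
  IsInducedPath G P ∧
  P.a ∈ X₁ ∧ P.b ∈ X₂ ∧
  (∀ v ∈ P.walk.support, v ≠ P.a → v ≠ P.b → v ∉ X₁ ∪ X₂) ∧
  (∀ Y ∈ 𝒯, Y ≠ X₁ → Y ≠ X₂ →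
    ((δ ((k : ℤ) + 1 + rkRealm k forts castles Y) : ℕ) : ℕ∞) <
      setDist G {v | v ∈ P.walk.support} Y) ∧
  GeoPrefix G c X₁ P ∧ GeoPrefix G c X₂ P.rev

/-- `P` is a passage incident with `X`. -/
def PassageIncident {V : Type} (G : SimpleGraph V) (Λ : G.edgeSet → G.edgeSet → Prop)
    (c ℓ d₀ k : ℕ) (δ : ℤ → ℕ) (𝒯 forts castles : Set (Set V))
    (X : Set V) (P : PathIn G) : Prop :=
  ∃ Y, IsPassage G Λ c ℓ d₀ k δ 𝒯 forts castles X Y P ∨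
    IsPassage G Λ c ℓ d₀ k δ 𝒯 forts castles Y X P

/-- The houses and forts of a subset `A` of a realm: `A⁰ = A ∖ castles`. -/
def nonCastles {V : Type} (castles A : Set (Set V)) : Set (Set V) := A \ castles

/-- A community (or indeed any set of buildings) `D` adjoins a fort `X` if some member of
`D` adjoins `X`. -/
def CommAdjoins {V : Type} (G : SimpleGraph V) (Λ : G.edgeSet → G.edgeSet → Prop)
    (𝒯 : Set (Set V)) (D : Set (Set V)) (X : Set V) : Prop :=
  ∃ Y ∈ D, Adjoins G Λ 𝒯 Y X

/-- Two forts `X₁, X₂ ∈ C` semiadjoin in `C`: they adjoin, or some community included in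
`C` adjoins both. -/
def Semiadjoin {V : Type} (G : SimpleGraph V) (Λ : G.edgeSet → G.edgeSet → Prop)
    (𝒯 forts castles : Set (Set V)) (C : Set (Set V)) (X₁ X₂ : Set V) : Prop :=
  Adjoins G Λ 𝒯 X₁ X₂ ∨
    ∃ D ⊆ C, IsCommunity G Λ 𝒯 forts castles D ∧
      CommAdjoins G Λ 𝒯 D X₁ ∧ CommAdjoins G Λ 𝒯 D X₂

/-- A fort `X ∈ C` that semiadjoins (in `C`) at most one other fort of `C`. -/
def FortPeripheral {V : Type} (G : SimpleGraph V) (Λ : G.edgeSet → G.edgeSet → Prop)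
    (𝒯 forts castles : Set (Set V)) (C : Set (Set V)) (X : Set V) : Prop :=
  X ∈ C ∧ X ∈ forts ∧
  {Y | Y ∈ C ∧ Y ∈ forts ∧ Y ≠ X ∧
    Semiadjoin G Λ 𝒯 forts castles C X Y}.Subsingleton

/-- `X ∈ C` is `C`-peripheral. -/
def Peripheral {V : Type} (G : SimpleGraph V) (Λ : G.edgeSet → G.edgeSet → Prop)
    (𝒯 forts castles : Set (Set V)) (C : Set (Set V)) (X : Set V) : Prop :=
  FortPeripheral G Λ 𝒯 forts castles C X ∨
  (X ∈ C ∧ X ∉ forts ∧ X ∉ castles ∧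
    ∀ D ⊆ C, IsCommunity G Λ 𝒯 forts castles D → X ∈ D →
      {Y | Y ∈ C ∧ Y ∈ forts ∧ CommAdjoins G Λ 𝒯 D Y}.Subsingleton ∧
      ∀ Y ∈ C, Y ∈ forts → CommAdjoins G Λ 𝒯 D Y →
        FortPeripheral G Λ 𝒯 forts castles C Y)

/-- An integer interval. -/
def IsIntInterval (I : Set ℤ) : Prop :=
  ∀ a ∈ I, ∀ b ∈ I, ∀ x : ℤ, a ≤ x → x ≤ b → x ∈ I

/-- `(a,b)` is an end-set of the integer interval `I`. -/
def IsEndSet (I : Set ℤ) (a b : ℤ) : Prop :=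
  a ∈ I ∧ b ∈ I ∧ a - 1 ∉ I ∧ b + 1 ∉ I

/-- A province of type `t` of the realm `(𝒯, forts, castles)`. -/
def IsProvince {V : Type} (G : SimpleGraph V) (Λ : G.edgeSet → G.edgeSet → Prop)
    (ℓ k : ℕ) (𝒯 forts castles : Set (Set V)) (t : ℕ) (A : Set (Set V)) : Prop :=
  A ⊆ 𝒯 ∧ k + 1 ≤ t ∧ t ≤ ℓ - 1 ∧
  {X | X ∈ A ∧ X ∈ forts ∧
    Peripheral G Λ 𝒯 forts castles (nonCastles castles A) X}.encard ≤ 3 ^ (t - k) - 1 ∧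
  (∃ 𝒟 : Set (Set (Set V)), 𝒟.encard ≤ 3 ^ (t - k) - 2 ∧
    (∀ D ∈ 𝒟, IsCommunity G Λ 𝒯 forts castles D) ∧
    ⋃₀ 𝒟 = {X | X ∈ A ∧ X ∉ forts ∧ X ∉ castles ∧
      Peripheral G Λ 𝒯 forts castles (nonCastles castles A) X}) ∧
  {X | X ∈ A ∧ X ∈ castles}.encard = 3 ^ (t - k - 1)

/-- `X ∈ 𝒯` is a rebel: it is included in no province of the government. -/
def Rebel {V : Type} (𝒯 : Set (Set V)) (provs : Set (Set (Set V))) (X : Set V) : Prop :=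
  X ∈ 𝒯 ∧ ∀ A ∈ provs, X ∉ A

/-- A government for the realm `(𝒯, forts, castles)`: a set `provs` of pairwise
vertex-disjoint provinces, with framework `F A` and type `ty A` for each `A ∈ provs`. -/
def IsGovernment {V : Type} (G : SimpleGraph V) (Λ : G.edgeSet → G.edgeSet → Prop)
    (c ℓ d₀ k : ℕ) (δ : ℤ → ℕ) (𝒯 forts castles : Set (Set V))
    (provs : Set (Set (Set V))) (F : Set (Set V) → Set V) (ty : Set (Set V) → ℕ) : Prop :=
  (∀ A ∈ provs, IsProvince G Λ ℓ k 𝒯 forts castles (ty A) A) ∧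
  (provs.Pairwise fun A A' => Disjoint (⋃₀ A) (⋃₀ A')) ∧
  (∀ A ∈ provs, IsBuilding G (F A) ∧ ⋃₀ A ⊆ F A) ∧
  (∀ A ∈ provs, ∀ v ∈ F A, ∃ x, (∃ X ∈ A, x ∈ X) ∧
    ∃ p : G.Walk v x, (∀ u ∈ p.support, u ∈ F A) ∧ p.length ≤ d₀ * (ty A - k - 1)) ∧
  (∀ A ∈ provs, ∀ A' ∈ provs, A ≠ A' →
    ((δ ((ty A : ℤ) + (ty A' : ℤ)) : ℕ) : ℕ∞) < setDist G (F A) (F A')) ∧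
  (∀ X ∈ castles, ∃ A ∈ provs, X ∈ A) ∧
  (∀ A ∈ provs, ∀ X, Rebel 𝒯 provs X →
    ((δ ((ty A : ℤ) + rkRealm k forts castles X) : ℕ) : ℕ∞) < setDist G (F A) X) ∧
  (∀ A ∈ provs, SuperfatIn G (ty A) c (F A))

/-- The strongholds of a government: the frameworks of its provinces and its rebels. -/
def Strongholds {V : Type} (𝒯 : Set (Set V)) (provs : Set (Set (Set V)))
    (F : Set (Set V) → Set V) : Set (Set V) :=
  (F '' provs) ∪ {X | Rebel 𝒯 provs X}

/-- `L_𝒢(X)`: the set of `X`-local vertices (for a stronghold `X`). -/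
def LocalSet {V : Type} (G : SimpleGraph V) (Λ : G.edgeSet → G.edgeSet → Prop)
    (𝒯 : Set (Set V)) (provs : Set (Set (Set V))) (F : Set (Set V) → Set V)
    (X : Set V) : Set V :=
  VCell G Λ (Strongholds 𝒯 provs F) X

/-- The stronghold `X` talks to the stronghold `Y`: there is a channel between them,
i.e. a path `R` with an edge `uv` such that the two components of `R ∖ {uv}` are
respectively `X`-local and `Y`-local. -/
def TalksTo {V : Type} (G : SimpleGraph V) (Λ : G.edgeSet → G.edgeSet → Prop)
    (𝒯 : Set (Set V)) (provs : Set (Set (Set V))) (F : Set (Set V) → Set V)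
    (X Y : Set V) : Prop :=
  ∃ (a u v b : V) (p : G.Walk a u) (q : G.Walk v b),
    p.IsPath ∧ q.IsPath ∧ G.Adj u v ∧
    (∀ w ∈ p.support, w ∈ LocalSet G Λ 𝒯 provs F X) ∧
    (∀ w ∈ q.support, w ∈ LocalSet G Λ 𝒯 provs F Y) ∧
    (∀ w ∈ p.support, w ∉ q.support)

/-- A set `C` of rebels is in communication. -/
def InCommunication {V : Type} (G : SimpleGraph V) (Λ : G.edgeSet → G.edgeSet → Prop)
    (𝒯 : Set (Set V)) (provs : Set (Set (Set V))) (F : Set (Set V) → Set V)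
    (C : Set (Set V)) : Prop :=
  ∀ D E : Set (Set V), D ∪ E = C → Disjoint D E → D.Nonempty → E.Nonempty →
    ∃ X ∈ D, ∃ Y ∈ E, TalksTo G Λ 𝒯 provs F X Y

/-- A network: a maximal set of rebel houses that is in communication. -/
def IsNetwork {V : Type} (G : SimpleGraph V) (Λ : G.edgeSet → G.edgeSet → Prop)
    (𝒯 forts castles : Set (Set V)) (provs : Set (Set (Set V))) (F : Set (Set V) → Set V)
    (N : Set (Set V)) : Prop :=
  (∀ X ∈ N, Rebel 𝒯 provs X ∧ X ∉ forts ∧ X ∉ castles) ∧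
  InCommunication G Λ 𝒯 provs F N ∧
  (∀ N', N ⊆ N' → (∀ X ∈ N', Rebel 𝒯 provs X ∧ X ∉ forts ∧ X ∉ castles) →
    InCommunication G Λ 𝒯 provs F N' → N' = N)

/-- A set `C` of rebels is organized: its houses form a union of networks. -/
def Organized {V : Type} (G : SimpleGraph V) (Λ : G.edgeSet → G.edgeSet → Prop)
    (𝒯 forts castles : Set (Set V)) (provs : Set (Set (Set V))) (F : Set (Set V) → Set V)
    (C : Set (Set V)) : Prop :=
  ∃ 𝒩 : Set (Set (Set V)), (∀ N ∈ 𝒩, IsNetwork G Λ 𝒯 forts castles provs F N) ∧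
    ⋃₀ 𝒩 = {X | X ∈ C ∧ X ∉ forts ∧ X ∉ castles}

/-- A cabal. -/
def IsCabal {V : Type} (G : SimpleGraph V) (Λ : G.edgeSet → G.edgeSet → Prop)
    (ℓ k : ℕ) (𝒯 forts castles : Set (Set V)) (provs : Set (Set (Set V)))
    (F : Set (Set V) → Set V) (ty : Set (Set V) → ℕ) (C : Set (Set V)) : Prop :=
  (∀ X ∈ C, Rebel 𝒯 provs X) ∧
  InCommunication G Λ 𝒯 provs F C ∧
  Organized G Λ 𝒯 forts castles provs F C ∧
  ∃ (Ldr : Set (Set V)) (LN : Set (Set (Set V))),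
    Ldr ⊆ {X | X ∈ C ∧ X ∈ forts} ∧ Ldr.encard ≤ 2 ∧
    (∀ N ∈ LN, IsNetwork G Λ 𝒯 forts castles provs F N ∧ N ⊆ C) ∧ LN.encard ≤ 3 ∧
    (∀ X ∈ C, Peripheral G Λ 𝒯 forts castles C X →
      X ∈ Ldr ∨ ∃ N ∈ LN, X ∈ N) ∧
    (∀ X ∈ C, (∃ Y, Rebel 𝒯 provs Y ∧ Y ∉ C ∧ TalksTo G Λ 𝒯 provs F X Y) →
      X ∈ Ldr ∨ ∃ N ∈ LN, X ∈ N) ∧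
    (∃ j : ℕ, k + 1 ≤ j ∧ j ≤ ℓ - 1 ∧
      ∃ A₁ A₂ A₃, A₁ ∈ provs ∧ A₂ ∈ provs ∧ A₃ ∈ provs ∧
        A₁ ≠ A₂ ∧ A₁ ≠ A₃ ∧ A₂ ≠ A₃ ∧ ty A₁ = j ∧ ty A₂ = j ∧ ty A₃ = j ∧
        (∃ X ∈ C, TalksTo G Λ 𝒯 provs F X (F A₁)) ∧
        (∃ X ∈ C, TalksTo G Λ 𝒯 provs F X (F A₂)) ∧
        (∃ X ∈ C, TalksTo G Λ 𝒯 provs F X (F A₃))) ∧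
    (C.encard = 1 ∨ IsNetwork G Λ 𝒯 forts castles provs F C ∨
      ∀ j : ℕ, k + 1 ≤ j → j ≤ ℓ - 1 →
        {A | A ∈ provs ∧ ty A = j ∧ ∃ X ∈ C, TalksTo G Λ 𝒯 provs F X (F A)}.encard ≤ 4)

/-- A small government: each framework has quasi-bound at most
`(7(ℓ−k)3^{ℓ−k}α, β + 2(ℓ−k−1)d₀)`. -/
def SmallGov {V : Type} (G : SimpleGraph V) (ℓ d₀ k α β : ℕ)
    (provs : Set (Set (Set V))) (F : Set (Set V) → Set V) : Prop :=
  ∀ A ∈ provs, QuasiBound G (F A) (7 * (ℓ - k) * 3 ^ (ℓ - k) * α)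
    (β + 2 * (ℓ - k - 1) * d₀)

/-- The government `(provs₂, F₂, ty₂)` extends the government `(provs₁, F₁, ty₁)`. -/
def GovExtends {V : Type} (𝒯 : Set (Set V))
    (provs₁ : Set (Set (Set V))) (F₁ : Set (Set V) → Set V) (ty₁ : Set (Set V) → ℕ)
    (provs₂ : Set (Set (Set V))) (F₂ : Set (Set V) → Set V) (ty₂ : Set (Set V) → ℕ) : Prop :=
  (∀ X, Rebel 𝒯 provs₁ X → Rebel 𝒯 provs₂ X ∨ ∃ A ∈ provs₂, X ∈ A) ∧
  (∀ A₁ ∈ provs₁, ∃ A₂ ∈ provs₂, A₁ ⊆ A₂ ∧ F₁ A₁ ⊆ F₂ A₂ ∧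
    ((A₁ = A₂ ∧ F₁ A₁ = F₂ A₂ ∧ ty₂ A₂ = ty₁ A₁) ∨ ty₁ A₁ < ty₂ A₂))

/-- Two governments are the same (agree on provinces and, there, on frameworks and types). -/
def GovEquiv {V : Type}
    (provs₁ : Set (Set (Set V))) (F₁ : Set (Set V) → Set V) (ty₁ : Set (Set V) → ℕ)
    (provs₂ : Set (Set (Set V))) (F₂ : Set (Set V) → Set V) (ty₂ : Set (Set V) → ℕ) : Prop :=
  provs₁ = provs₂ ∧ ∀ A ∈ provs₁, F₁ A = F₂ A ∧ ty₁ A = ty₂ A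

/-- A stable small government: a small government such that no other small government
extends it. -/
def StableSmallGov {V : Type} (G : SimpleGraph V) (Λ : G.edgeSet → G.edgeSet → Prop)
    (c ℓ d₀ k : ℕ) (δ : ℤ → ℕ) (α β : ℕ) (𝒯 forts castles : Set (Set V))
    (provs : Set (Set (Set V))) (F : Set (Set V) → Set V) (ty : Set (Set V) → ℕ) : Prop :=
  IsGovernment G Λ c ℓ d₀ k δ 𝒯 forts castles provs F ty ∧
  SmallGov G ℓ d₀ k α β provs F ∧
  ∀ provs' F' ty', IsGovernment G Λ c ℓ d₀ k δ 𝒯 forts castles provs' F' ty' →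
    SmallGov G ℓ d₀ k α β provs' F' →
    GovExtends 𝒯 provs F ty provs' F' ty' →
    GovEquiv provs F ty provs' F' ty'

/-! A maximal set `S` of vertices pairwise more than `δ 0` apart is `δ 0`-dense, and `δ 0 ≤ d₀`.
Making every vertex of `S` a one-vertex fort gives a 0th-century society: `H₀` is a single
vertex, a singleton has quasi-bound `(1, 0)`, and there are no houses. -/

namespace SetRel

variable {X : Type*}

theorem exists_maximal_isSeparated (R : SetRel X X) (s : Set X) :
    ∃ N, Maximal (fun N ↦ N ⊆ s ∧ R.IsSeparated N) N :=
  zorn_subset _ fun C hCs hC ↦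
    ⟨⋃₀ C, ⟨Set.sUnion_subset fun _ hN ↦ (hCs hN).1,
      (Set.pairwise_sUnion hC.directedOn).2 fun _ hN ↦ (hCs hN).2⟩,
      fun _ ↦ Set.subset_sUnion_of_mem⟩

end SetRel

namespace SimpleGraph

variable {V : Type} (G : SimpleGraph V)

def closePairs (r : ℕ∞) : SetRel V V := {p | G.edist p.1 p.2 ≤ r}

instance (r : ℕ∞) : (G.closePairs r).IsRefl := ⟨fun _ ↦ by simp [closePairs]⟩

instance (r : ℕ∞) : (G.closePairs r).IsSymm :=
  ⟨fun _ _ h ↦ by simpa [closePairs, edist_comm] using h⟩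

theorem exists_separated_dense (r : ℕ∞) :
    ∃ S : Set V, S.Pairwise (fun u w ↦ r < G.edist u w) ∧ ∀ v, ∃ u ∈ S, G.edist v u ≤ r := by
  obtain ⟨S, hS⟩ := (G.closePairs r).exists_maximal_isSeparated Set.univ
  refine ⟨S, hS.1.2.imp fun _ _ ↦ ?_, fun v ↦ SetRel.IsCover.of_maximal_isSeparated hS trivial⟩
  simp [closePairs]

end SimpleGraph

section

variable {V : Type} (G : SimpleGraph V)

theorem setDist_singleton (u w : V) : setDist G {u} {w} = G.edist u w := by
  simp [setDist]

theorem isBuilding_singleton (v : V) : IsBuilding G {v} :=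
  Connected.of_subsingleton

theorem quasiSize_empty (k r : ℕ) : QuasiSize G ∅ k r :=
  ⟨∅, by simp, by simp⟩

theorem quasiSize_singleton (v : V) {k : ℕ} (hk : 0 < k) (r : ℕ) : QuasiSize G {v} k r :=
  ⟨{v}, by rw [Set.encard_singleton]; exact_mod_cast hk, by simp⟩

variable {G}

theorem QuasiSize.mono {X Y : Set V} {k r : ℕ} (h : QuasiSize G Y k r) (hXY : X ⊆ Y) :
    QuasiSize G X k r :=
  let ⟨Z, hZ, hYZ⟩ := h
  ⟨Z, hZ, fun x hx ↦ hYZ x (hXY hx)⟩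

theorem QuasiSize.quasiLineWidth {X : Set V} {k r : ℕ} (h : QuasiSize G X k r) :
    QuasiLineWidth G X k r :=
  ⟨Unit, inferInstance, fun _ ↦ X, fun _ ↦ subset_rfl, fun _ hv ↦ ⟨(), hv⟩,
    fun _ _ hu hv _ ↦ ⟨(), hu, hv⟩, fun _ _ _ h _ ↦ absurd h (lt_irrefl _), fun _ ↦ h⟩

theorem QuasiSize.quasiBound {X : Set V} {k r : ℕ} (h : QuasiSize G X k r) :
    QuasiBound G X k r :=
  ⟨h.quasiLineWidth, h.mono fun _ hv ↦ hv.1⟩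

end

instance : Subsingleton (HVert 0) :=
  ⟨fun
    | none, none => rfl
    | some ⟨_, _, h⟩, _ | _, some ⟨_, _, h⟩ => absurd h (Nat.not_lt_zero _)⟩

instance : IsEmpty (HTree 0).edgeSet := by
  refine ⟨fun ⟨e, he⟩ ↦ ?_⟩
  induction e using Sym2.ind with
  | _ x y => exact (HTree 0).loopless.irrefl x (Subsingleton.elim x y ▸ he)

instance : Subsingleton (HVert 0 ⊕ (HTree 0).edgeSet) :=
  ⟨fun
    | .inl v, .inl w => congrArg _ (Subsingleton.elim v w)
    | .inr e, _ | _, .inr e => isEmptyElim e⟩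

theorem not_inBranch_zero (i : Fin 3) (x : HVert 0 ⊕ (HTree 0).edgeSet) : ¬ inBranch 0 i x := by
  rcases x with v | e
  · rintro ⟨⟨l, hl⟩, -⟩
    exact Nat.not_lt_zero _ hl
  · exact isEmptyElim e

theorem superfatIn_zero_of_mem {V : Type} (G : SimpleGraph V) (c : ℕ) {X : Set V} {v : V}
    (hv : v ∈ X) : SuperfatIn G 0 c X := by
  refine ⟨fun _ ↦ {v}, ⟨⟨fun _ ↦ Set.singleton_nonempty v, fun _ ↦ isBuilding_singleton G v,
    fun x y hxy ↦ absurd (Subsingleton.elim x y) hxy, fun e ↦ isEmptyElim e,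
    fun x y hxy ↦ absurd (Subsingleton.elim x y) hxy⟩, ?_⟩, fun _ ↦ Set.singleton_subset_iff.2 hv⟩
  intro i _ _ x hx
  obtain ⟨z, hz, -⟩ := Set.mem_iUnion₂.1 hx
  exact absurd hz (not_inBranch_zero i z)

theorem rkSoc_of_mem {V : Type} (k : ℕ) {forts : Set (Set V)} {X : Set V} (hX : X ∈ forts) :
    rkSoc k forts X = k :=
  if_pos hX

theorem isSociety_singletons {V : Type} (G : SimpleGraph V) (Λ : G.edgeSet → G.edgeSet → Prop)
    (c : ℕ) {d₀ : ℕ} {δ : ℤ → ℕ} {α : ℕ} (hα : 0 < α) (β : ℕ) (hδd₀ : δ 0 ≤ d₀) {S : Set V}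
    (hsep : S.Pairwise fun u w ↦ (δ 0 : ℕ∞) < G.edist u w)
    (hdense : ∀ v, ∃ u ∈ S, G.edist v u ≤ δ 0) :
    IsSociety G Λ c d₀ 0 δ α β (singleton '' S) (singleton '' S) := by
  refine ⟨subset_rfl, ?_, ?_, fun v ↦ ?_, ?_, ?_, ?_, fun C hC _ _ ↦ ?_⟩
  · rintro _ ⟨u, -, rfl⟩
    exact isBuilding_singleton G u
  · rintro _ ⟨u, -, rfl⟩ _ ⟨w, -, rfl⟩ hne
    exact Set.disjoint_singleton.2 fun h ↦ hne (congrArg _ h)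
  · obtain ⟨u, hu, hvu⟩ := hdense v
    exact ⟨{u}, Set.mem_image_of_mem _ hu, by
      rw [setDist_singleton]; exact hvu.trans (by exact_mod_cast hδd₀)⟩
  · rintro _ ⟨u, hu, rfl⟩ _ ⟨w, hw, rfl⟩ hne
    rw [rkSoc_of_mem 0 (Set.mem_image_of_mem singleton hu),
      rkSoc_of_mem 0 (Set.mem_image_of_mem singleton hw), setDist_singleton]
    exact hsep hu hw fun h ↦ hne (congrArg _ h)
  · rintro _ ⟨u, -, rfl⟩
    exact superfatIn_zero_of_mem G c rfl
  · rintro _ ⟨u, -, rfl⟩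
    exact (quasiSize_singleton G u hα β).quasiBound
  · obtain rfl : C = ∅ := Set.subset_empty_iff.1 (Set.sdiff_self ▸ hC)
    simpa using (quasiSize_empty G α (β - d₀)).quasiBound

theorem exists_zeroth_century_society_general {V : Type} (c ℓ : ℕ) (d₀ : ℕ) (δ : ℤ → ℕ)
    (hδ : IsSpaceReq c ℓ d₀ 0 δ) (α β : ℕ) (hα : 0 < α) (G : SimpleGraph V)
    (Λ : G.edgeSet → G.edgeSet → Prop) :
    ∃ 𝒯 forts : Set (Set V), IsSociety G Λ c d₀ 0 δ α β 𝒯 forts := by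
  have hδd₀ : δ 0 ≤ d₀ := hδ.2.1 0 le_rfl (by positivity)
  obtain ⟨S, hsep, hdense⟩ := G.exists_separated_dense (δ 0)
  exact ⟨_, _, isSociety_singletons G Λ c hα β hδd₀ hsep hdense⟩

/-- in every connected graph with a tie-breaker there is a 0th-century
society. -/
theorem exists_zeroth_century_society {V : Type} (c ℓ : ℕ) (hc : 2 ≤ c) (hℓ : 1 ≤ ℓ)
    (d₀ : ℕ) (hd₀ : d₀ = 5 * c * 3 ^ (2 * ℓ * (ℓ + 1)))
    (δ : ℤ → ℕ) (hδ : IsSpaceReq c ℓ d₀ 0 δ)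
    (α β : ℕ) (hα : 0 < α) (hβ : 0 < β)
    (G : SimpleGraph V) (hG : G.Connected)
    (Λ : G.edgeSet → G.edgeSet → Prop) (hΛ : IsWellOrder G.edgeSet Λ) :
    ∃ 𝒯 forts : Set (Set V), IsSociety G Λ c d₀ 0 δ α β 𝒯 forts :=
  exists_zeroth_century_society_general c ℓ d₀ δ hδ α β hα G Λ
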